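/- In the field F = ℚ(p, x₁, x₂, x₃) one has the identity ω(1,1) + p⁴·(x₁x₂x₃/p⁶)·ω(0,1) + (p−1)(p²+p+1)·(x₁x₂x₃/p⁶) = (1/p³)(sym_{1,1,0}+sym_{2,1,1}) + ((p−1)(p²+p+1)/p⁶)·sym_{1,1,1}. (The left-hand side is Ω(T₂(p²))/x₀² computed from Andrianov's formula Ω(T_i(p²)) = Σ_{a+b≤3, a≥i} p^{b(a+b+1)} sm_p(a−i,a) x₀² ω(π_{a,b}) for i = 2, using sm_p(0,2) = 1, sm_p(1,3) = (p−1)(p²+p+1), and homogeneity ω(t(p·d)) = (x₁x₂x₃/p⁶)ω(t(d)).) -/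

import Mathlib

/-! Common setup: the field `F = ℚ(p, x₁, x₂, x₃)`, realized as the fraction field of the
polynomial ring `ℚ[p, x₁, x₂, x₃]`.  `p` is the variable of index `0`, and `x i` (for
`i : Fin 3`) are the variables `x₁, x₂, x₃`. -/

noncomputable section

/-- The rational function field `ℚ(p, x₁, x₂, x₃)`. -/
abbrev F : Type := FractionRing (MvPolynomial (Fin 4) ℚ)

/-- The indeterminate `p`. -/
def p : F := algebraMap (MvPolynomial (Fin 4) ℚ) F (MvPolynomial.X 0)

/-- The indeterminates `x₁, x₂, x₃` (as `x 0, x 1, x 2`). -/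
def x (i : Fin 3) : F := algebraMap (MvPolynomial (Fin 4) ℚ) F (MvPolynomial.X i.succ)

/-- The monomial symmetric polynomial `sym_{a,b,c}` in `x₁, x₂, x₃`: the sum of all *distinct*
monomials obtained from `x₁^a x₂^b x₃^c` by permuting the variables. -/
def sym (a b c : ℕ) : F :=
  ∑ e ∈ Finset.univ.image (fun σ : Equiv.Perm (Fin 3) => (![a, b, c]) ∘ σ),
    ∏ j, x j ^ e j

/-- Andrianov's formula for the Satake spherical image `ω(λ,μ) = ω(t(1, p^λ, p^μ))`
of the `GL₃` Hecke operator `t(1, p^λ, p^μ)`, for `0 ≤ λ ≤ μ`. -/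
def ω (l m : ℕ) : F :=
  ((if l = 0 ∧ m = 0 then p ^ 3 / ((p + 1) * (p ^ 2 + p + 1))
    else if l = 0 ∨ l = m then p / (p + 1)
    else 1) / p ^ (2 * l + m)) *
  ∑ σ : Equiv.Perm (Fin 3),
    x (σ 1) ^ l * x (σ 2) ^ m *
      ((x (σ 1) - x (σ 0) / p) * (x (σ 2) - x (σ 0) / p) * (x (σ 2) - x (σ 1) / p)) /
      ((x (σ 1) - x (σ 0)) * (x (σ 2) - x (σ 0)) * (x (σ 2) - x (σ 1)))

/-! Andrianov's sums are, up to normalisation, Hall–Littlewood polynomials in `x₁, x₂, x₃` with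
parameter `1/p`, and for the two shapes occurring here they collapse to elementary symmetric
functions: `ω(0,1) = e₁/p` and `ω(1,1) = e₂/p³`. As `sym_{1,1,0} = e₂`, `sym_{2,1,1} = e₁e₃` and
`sym_{1,1,1} = e₃`, both sides become the same rational function of `p, e₁, e₂, e₃`. -/

open Equiv

theorem Equiv.Perm.sum_fin_three {M : Type*} [AddCommMonoid M] (f : Fin 3 → Fin 3 → Fin 3 → M) :
    ∑ σ : Perm (Fin 3), f (σ 0) (σ 1) (σ 2) =
      f 0 1 2 + f 1 0 2 + f 2 1 0 + f 0 2 1 + f 1 2 0 + f 2 0 1 := by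
  rw [show (Finset.univ : Finset (Perm (Fin 3))) =
      {1, swap 0 1, swap 0 2, swap 1 2, finRotate 3, (finRotate 3)⁻¹} by decide]
  repeat rw [Finset.sum_insert (by decide)]
  simp only [Finset.sum_singleton, add_assoc]
  rfl

section HallLittlewood

variable {K : Type*} [Field K] {t : K} {y : Fin 3 → K}

def hallLittlewoodTerm (t : K) (y : Fin 3 → K) (l m : ℕ) (i j k : Fin 3) : K :=
  y j ^ l * y k ^ m * ((y j - y i / t) * (y k - y i / t) * (y k - y j / t)) /
    ((y j - y i) * (y k - y i) * (y k - y j))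

/-- Up to a constant, the Hall–Littlewood polynomial `P_{(m,l,0)}(y; t⁻¹)`; `ω l m` is Andrianov's
constant times `hallLittlewoodSum p x l m`. -/
def hallLittlewoodSum (t : K) (y : Fin 3 → K) (l m : ℕ) : K :=
  ∑ σ : Perm (Fin 3), hallLittlewoodTerm t y l m (σ 0) (σ 1) (σ 2)

lemma hallLittlewoodSum_zero_one (ht : t ≠ 0) (hy : Function.Injective y) :
    hallLittlewoodSum t y 0 1 = (t + 1) * (y 0 + y 1 + y 2) / t := by
  rw [hallLittlewoodSum, Perm.sum_fin_three]
  simp only [hallLittlewoodTerm]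
  field_simp [sub_ne_zero, hy.ne_iff]
  ring

lemma hallLittlewoodSum_one_one (ht : t ≠ 0) (hy : Function.Injective y) :
    hallLittlewoodSum t y 1 1 = (t + 1) * (y 0 * y 1 + y 0 * y 2 + y 1 * y 2) / t := by
  rw [hallLittlewoodSum, Perm.sum_fin_three]
  simp only [hallLittlewoodTerm]
  field_simp [sub_ne_zero, hy.ne_iff]
  ring

end HallLittlewood

lemma p_ne_zero : p ≠ 0 :=
  (map_ne_zero_iff _ (IsFractionRing.injective _ _)).mpr (MvPolynomial.X_ne_zero 0)

lemma p_add_one_ne_zero : p + 1 ≠ 0 := by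
  have : (MvPolynomial.X 0 + 1 : MvPolynomial (Fin 4) ℚ) ≠ 0 := fun h => by
    simpa using congrArg (MvPolynomial.eval fun _ => 1) h
  simpa [p] using (map_ne_zero_iff _ (IsFractionRing.injective _ F)).mpr this

lemma x_injective : Function.Injective x :=
  (IsFractionRing.injective _ _).comp (MvPolynomial.X_injective.comp (Fin.succ_injective 3))

lemma ω_zero_one : ω 0 1 = (x 0 + x 1 + x 2) / p := by
  have : ω 0 1 = p / (p + 1) / p ^ 1 * hallLittlewoodSum p x 0 1 := rfl
  rw [this, hallLittlewoodSum_zero_one p_ne_zero x_injective]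
  field_simp [p_ne_zero, p_add_one_ne_zero]

lemma ω_one_one : ω 1 1 = (x 0 * x 1 + x 0 * x 2 + x 1 * x 2) / p ^ 3 := by
  have : ω 1 1 = p / (p + 1) / p ^ 3 * hallLittlewoodSum p x 1 1 := rfl
  rw [this, hallLittlewoodSum_one_one p_ne_zero x_injective]
  field_simp [p_ne_zero, p_add_one_ne_zero]

lemma sym_one_one_zero : sym 1 1 0 = x 0 * x 1 + x 0 * x 2 + x 1 * x 2 := by
  rw [sym, show Finset.univ.image (fun σ : Perm (Fin 3) => ![1, 1, 0] ∘ σ) =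
      {![1, 1, 0], ![1, 0, 1], ![0, 1, 1]} by decide,
    Finset.sum_insert (by decide), Finset.sum_insert (by decide), Finset.sum_singleton]
  simp [Fin.prod_univ_three, add_assoc]

lemma sym_two_one_one :
    sym 2 1 1 = x 0 ^ 2 * x 1 * x 2 + x 0 * x 1 ^ 2 * x 2 + x 0 * x 1 * x 2 ^ 2 := by
  rw [sym, show Finset.univ.image (fun σ : Perm (Fin 3) => ![2, 1, 1] ∘ σ) =
      {![2, 1, 1], ![1, 2, 1], ![1, 1, 2]} by decide,
    Finset.sum_insert (by decide), Finset.sum_insert (by decide), Finset.sum_singleton]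
  simp [Fin.prod_univ_three, add_assoc]

lemma sym_one_one_one : sym 1 1 1 = x 0 * x 1 * x 2 := by
  rw [sym, show Finset.univ.image (fun σ : Perm (Fin 3) => ![1, 1, 1] ∘ σ) = {![1, 1, 1]} by
    decide]
  simp [Fin.prod_univ_three]

/-- the identity for `Ω(T₂(p²))/x₀²`. -/
theorem Omega_T2_p2 :
    ω 1 1 + p ^ 4 * (x 0 * x 1 * x 2 / p ^ 6) * ω 0 1
      + (p - 1) * (p ^ 2 + p + 1) * (x 0 * x 1 * x 2 / p ^ 6)
    = (1 / p ^ 3) * (sym 1 1 0 + sym 2 1 1)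
      + ((p - 1) * (p ^ 2 + p + 1) / p ^ 6) * sym 1 1 1 := by
  rw [ω_one_one, ω_zero_one, sym_one_one_zero, sym_two_one_one, sym_one_one_one]
  field_simp [p_ne_zero]
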